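/- For the strict-rate-constrained UCB algorithm there exists an absolute constant C > 0 (independent of K, T, v, and the reward distributions) such that for every arm i with Δ_i > 0: E[m_T(i)] ≤ (16·ln T / Δ_i²)·(1 − K·v)/(1 − (K−1)·v) + 2·(1 − K·v)² + C. -/

import Mathlib

open MeasureTheory ProbabilityTheory Finset

namespace FairBandit

variable {Ω : Type} [MeasurableSpace Ω]

/-- Number of pulls of arm `i` among rounds `1, …, t`. -/
def pullCount {K : ℕ} (arm : ℕ → Ω → Fin K) (i : Fin K) (t : ℕ) (ω : Ω) : ℕ :=
  ((Finset.Icc 1 t).filter (fun s => arm s ω = i)).card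

/-- Empirical mean of arm `i` at round `t`:  average of the first `n_{t-1}(i)`
samples `X i 0, X i 1, …` of arm `i` (the sample `X i k` is observed at the
`(k+1)`-st pull of arm `i`). -/
noncomputable def empMean {K : ℕ} (X : Fin K → ℕ → Ω → ℝ) (arm : ℕ → Ω → Fin K)
    (i : Fin K) (t : ℕ) (ω : Ω) : ℝ :=
  (∑ k ∈ Finset.range (pullCount arm i (t - 1) ω), X i k ω) / (pullCount arm i (t - 1) ω)

/-- Upper confidence bound of arm `i` at round `t`. -/
noncomputable def ucb {K : ℕ} (T : ℕ) (X : Fin K → ℕ → Ω → ℝ) (arm : ℕ → Ω → Fin K)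
    (i : Fin K) (t : ℕ) (ω : Ω) : ℝ :=
  empMean X arm i t ω + 2 * Real.sqrt (Real.log T / (pullCount arm i (t - 1) ω))

/-- The stochastic bandit environment: for every arm `i` the samples
`X i 0, X i 1, …` take values in `[0,1]`, the whole family is (jointly)
independent, the samples of each arm are identically distributed, and the
mean of every sample of arm `i` is `μ i`. -/
def BanditEnv {K : ℕ} (P : Measure Ω) (X : Fin K → ℕ → Ω → ℝ) (μ : Fin K → ℝ) : Prop :=
  (∀ i k, Measurable (X i k)) ∧
  (∀ i k ω, X i k ω ∈ Set.Icc (0 : ℝ) 1) ∧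
  iIndepFun (m := fun _ : Fin K × ℕ => (inferInstance : MeasurableSpace ℝ))
    (fun p : Fin K × ℕ => X p.1 p.2) P ∧
  (∀ i k, Measure.map (X i k) P = Measure.map (X i 0) P) ∧
  (∀ i k, ∫ ω, X i k ω ∂P = μ i)

/-- Block offset of a round `t > K`:  writing `t - K = (j-1)·L + s` with
`s ∈ {1, …, L}`, the offset is `s`. -/
def offset (K L t : ℕ) : ℕ := (t - K - 1) % L + 1

/-- The non-prescheduled rounds among `{K+1, …, T}`. -/
def freeRounds (K L T : ℕ) (S : Finset ℕ) : Finset ℕ :=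
  (Finset.Icc (K + 1) T).filter (fun t => offset K L t ∉ S)

/-- The strict-rate-constrained UCB algorithm: the pulled arm `arm t` is the
`t`-th arm for `t = 1, …, K`; afterwards, prescheduled rounds (block offset in
`S`) pull the prescheduled arm `g s`, and all other rounds pull the arm with
largest UCB index (ties broken by smallest index). -/
def StrictUCB {K : ℕ} (T L : ℕ) (S : Finset ℕ) (g : ℕ → Fin K)
    (X : Fin K → ℕ → Ω → ℝ) (arm : ℕ → Ω → Fin K) : Prop :=
  (∀ t, Measurable (arm t)) ∧
  (∀ t ω, 1 ≤ t → t ≤ K → ((arm t ω : ℕ) = t - 1)) ∧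
  (∀ t ω, K < t → offset K L t ∈ S → arm t ω = g (offset K L t)) ∧
  (∀ t ω, K < t → offset K L t ∉ S →
    (∀ j, ucb T X arm j t ω ≤ ucb T X arm (arm t ω) t ω) ∧
    (∀ j, ucb T X arm j t ω = ucb T X arm (arm t ω) t ω → arm t ω ≤ j))

end FairBandit

open FairBandit MeasureTheory ProbabilityTheory

namespace FairBandit
/-- Number of non-prescheduled rounds in `{K+1, …, T}` at which arm `i` is pulled. -/
def freePulls {K : ℕ} (arm : ℕ → Ω' → Fin K) (L T : ℕ) (S : Finset ℕ)
    (i : Fin K) (ω : Ω') : ℕ :=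
  ((freeRounds K L T S).filter (fun t => arm t ω = i)).card
end FairBandit

/-!
Off a bad event, every sample mean of arm `i` and of `istar` over `n ≤ T` samples lies within
`2 √(ln T / n)` of its mean; by Hoeffding's inequality and a union bound this event has
probability at most `2 T⁻⁷`. Off it, the UCB rule can pull `i` at a free round only while
`n_{t-1}(i) < u = 16 ln T / Δ²`. If `t` is the last such round and lies in block `j`, then arm `i`
was pulled before `t` once initially, at the other `m - 1` such rounds and at the `j` earlier
prescheduled slots, so `m + j < u`; and a block holds only `L - K` free rounds, so
`m ≤ (j + 1)(L - K)`. Eliminating `j` gives `m ≤ (u + 1)(L - K)/(L - K + 1)`, which is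
`(u + 1)(1 - Kv)/(1 - (K - 1)v)`. The bad event costs at most `T · 2T⁻⁷ ≤ 1`, so `C = 2` works.
-/

section Probability

variable {Ω : Type*} [MeasurableSpace Ω] {P : Measure Ω} [IsProbabilityMeasure P]
  {Z : ℕ → Ω → ℝ} {ν : ℝ}

theorem measureReal_mean_add_le_sampleMean_le (hind : iIndepFun Z P)
    (hmeas : ∀ k, Measurable (Z k)) (hZ : ∀ k ω, Z k ω ∈ Set.Icc (0 : ℝ) 1)
    (hmean : ∀ k, P[Z k] = ν) {n : ℕ} (hn : 0 < n) {ε : ℝ} (hε : 0 ≤ ε) :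
    P.real {ω | ν + ε ≤ (∑ k ∈ range n, Z k ω) / n} ≤ Real.exp (-2 * n * ε ^ 2) := by
  have hn' : (0 : ℝ) < n := by exact_mod_cast hn
  have hsubG : ∀ k < n, HasSubgaussianMGF (fun ω ↦ Z k ω - ν) ((‖(1 : ℝ) - 0‖₊ / 2) ^ 2) P :=
    fun k _ ↦ hmean k ▸ hasSubgaussianMGF_of_mem_Icc (hmeas k).aemeasurable (ae_of_all _ (hZ k))
  have hind' : iIndepFun (fun k ω ↦ Z k ω - ν) P :=
    hind.comp (fun _ x ↦ x - ν) fun _ ↦ measurable_id.sub_const ν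
  have hoeffding := HasSubgaussianMGF.measure_sum_range_ge_le_of_iIndepFun hind' hsubG
    (mul_nonneg hn'.le hε)
  have hset : {ω | ν + ε ≤ (∑ k ∈ range n, Z k ω) / n} =
      {ω | n * ε ≤ ∑ k ∈ range n, (Z k ω - ν)} := by
    ext ω
    simp only [Set.mem_ofPred_eq, le_div_iff₀ hn', sum_sub_distrib, sum_const, card_range,
      nsmul_eq_mul]
    constructor <;> intro h <;> linarith
  rw [hset]
  refine hoeffding.trans_eq (congrArg Real.exp ?_)
  norm_num
  field_simp
  ring

theorem measureReal_sampleMean_le_mean_sub_le (hind : iIndepFun Z P)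
    (hmeas : ∀ k, Measurable (Z k)) (hZ : ∀ k ω, Z k ω ∈ Set.Icc (0 : ℝ) 1)
    (hmean : ∀ k, P[Z k] = ν) {n : ℕ} (hn : 0 < n) {ε : ℝ} (hε : 0 ≤ ε) :
    P.real {ω | (∑ k ∈ range n, Z k ω) / n ≤ ν - ε} ≤ Real.exp (-2 * n * ε ^ 2) := by
  have hn' : (0 : ℝ) < n := by exact_mod_cast hn
  have hflip := measureReal_mean_add_le_sampleMean_le (Z := fun k ω ↦ 1 - Z k ω) (ν := 1 - ν)
    (hind.comp (fun _ x ↦ 1 - x) fun _ ↦ measurable_const.sub measurable_id)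
    (fun k ↦ measurable_const.sub (hmeas k))
    (fun k ω ↦ ⟨by linarith [(hZ k ω).2], by linarith [(hZ k ω).1]⟩)
    (fun k ↦ by
      rw [integral_sub (integrable_const 1) (Integrable.of_mem_Icc 0 1 (hmeas k).aemeasurable
        (ae_of_all _ (hZ k))), hmean k]
      simp) hn hε
  refine le_of_eq_of_le (congrArg P.real (Set.ext fun ω ↦ ?_)) hflip
  simp only [Set.mem_ofPred_eq, sum_sub_distrib, sum_const, card_range, nsmul_eq_mul, mul_one,
    sub_div, div_self hn'.ne']
  constructor <;> intro h <;> linarith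

theorem integral_le_add_mul_measureReal {f : Ω → ℝ} (hf : 0 ≤ f) {B : Set Ω}
    (hB : MeasurableSet B) {c M : ℝ} (hc : 0 ≤ c) (hM : ∀ ω, f ω ≤ M) (hcB : ∀ ω ∉ B, f ω ≤ c) :
    ∫ ω, f ω ∂P ≤ c + M * P.real B := by
  have hdom : ∀ ω, f ω ≤ c + B.indicator (fun _ ↦ M) ω := fun ω ↦ by
    by_cases hω : ω ∈ B
    · rw [Set.indicator_of_mem hω]; linarith [hM ω]
    · rw [Set.indicator_of_notMem hω]; linarith [hcB ω hω]
  have hint : Integrable (fun ω ↦ c + B.indicator (fun _ ↦ M) ω) P :=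
    (integrable_const c).add ((integrable_const M).indicator hB)
  refine (integral_mono_of_nonneg (ae_of_all _ hf) hint (ae_of_all _ hdom)).trans_eq ?_
  rw [integral_add (integrable_const c) ((integrable_const M).indicator hB),
    integral_indicator_const M hB]
  simp [mul_comm]

end Probability

namespace FairBandit

section Schedule

variable {Ω : Type} {K L : ℕ}

theorem offset_add_mul_add {s : ℕ} (b : ℕ) (hs : s ∈ Icc 1 L) :
    offset K L (K + b * L + s) = s := by
  obtain ⟨hs1, hsL⟩ := mem_Icc.mp hs
  rw [offset, show K + b * L + s - K - 1 = (s - 1) + L * b by rw [mul_comm]; omega,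
    Nat.add_mul_mod_self_left, Nat.mod_eq_of_lt (by omega)]
  omega

theorem offset_mem_Icc (hL : 0 < L) (t : ℕ) : offset K L t ∈ Icc 1 L :=
  mem_Icc.mpr ⟨by simp [offset], Nat.mod_lt _ hL⟩

/-- A block of `L` rounds contains `L - K` free rounds. -/
theorem card_freeRounds_filter_le {T : ℕ} {S : Finset ℕ} (hL : 0 < L) (hS : S ⊆ Icc 1 L)
    (hScard : S.card = K) (t : ℕ) :
    ((freeRounds K L T S).filter (· ≤ t)).card ≤ ((t - K - 1) / L + 1) * (L - K) := by
  have hmaps : ∀ r ∈ (freeRounds K L T S).filter (· ≤ t),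
      ((r - K - 1) / L, offset K L r) ∈ range ((t - K - 1) / L + 1) ×ˢ (Icc 1 L \ S) := by
    intro r hr
    simp only [freeRounds, mem_filter, mem_Icc] at hr
    exact mem_product.mpr ⟨mem_range_succ_iff.mpr (Nat.div_le_div_right (by omega)),
      mem_sdiff.mpr ⟨offset_mem_Icc hL r, hr.1.2⟩⟩
  have hinj : Set.InjOn (fun r ↦ ((r - K - 1) / L, offset K L r))
      ((freeRounds K L T S).filter (· ≤ t)) := by
    intro r₁ h₁ r₂ h₂ heq
    simp only [coe_filter, freeRounds, mem_filter, mem_Icc, Set.mem_ofPred_eq] at h₁ h₂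
    simp only [offset, Prod.mk.injEq] at heq
    have := Nat.div_add_mod (r₁ - K - 1) L
    have := Nat.div_add_mod (r₂ - K - 1) L
    rw [heq.1] at *
    omega
  simpa [card_sdiff_of_subset hS, hScard] using card_le_card_of_injOn _ hmaps hinj

theorem one_le_pullCount {arm : ℕ → Ω → Fin K} {ω : Ω}
    (hinit : ∀ t, 1 ≤ t → t ≤ K → (arm t ω : ℕ) = t - 1) (j : Fin K) {t : ℕ} (ht : K ≤ t) :
    1 ≤ pullCount arm j t ω :=
  card_pos.mpr ⟨j + 1, mem_filter.mpr ⟨mem_Icc.mpr ⟨by omega, by omega⟩,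
    Fin.ext (by have := hinit (j + 1) (by omega) (by omega); omega)⟩⟩

theorem pullCount_le (arm : ℕ → Ω → Fin K) (j : Fin K) (t : ℕ) (ω : Ω) :
    pullCount arm j t ω ≤ t :=
  (card_filter_le _ _).trans (by simp)

theorem arm_add_mul_add {S : Finset ℕ} {g : ℕ → Fin K} {arm : ℕ → Ω → Fin K} {ω : Ω}
    (hpre : ∀ t, K < t → offset K L t ∈ S → arm t ω = g (offset K L t))
    (hS : S ⊆ Icc 1 L) {s : ℕ} (hs : s ∈ S) (b : ℕ) : arm (K + b * L + s) ω = g s := by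
  have hoff := offset_add_mul_add (K := K) b (hS hs)
  rw [hpre _ (by have := (mem_Icc.mp (hS hs)).1; omega) (by rw [hoff]; exact hs), hoff]

theorem one_add_card_add_blocks_le_pullCount {S : Finset ℕ} {g : ℕ → Fin K}
    {arm : ℕ → Ω → Fin K} {ω : Ω}
    (hinit : ∀ t, 1 ≤ t → t ≤ K → (arm t ω : ℕ) = t - 1)
    (hpre : ∀ t, K < t → offset K L t ∈ S → arm t ω = g (offset K L t))
    (hS : S ⊆ Icc 1 L) {s : ℕ} (hs : s ∈ S) {i : Fin K} (hgs : g s = i) {t : ℕ} (ht : K < t)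
    (F : Finset ℕ) (hF : ∀ r ∈ F, K < r ∧ r < t ∧ offset K L r ∉ S ∧ arm r ω = i) :
    1 + F.card + (t - K - 1) / L ≤ pullCount arm i (t - 1) ω := by
  set j := (t - K - 1) / L
  have hsL := mem_Icc.mp (hS hs)
  let prescheduled := (range j).image (fun b ↦ K + b * L + s)
  have hpre_lt : ∀ b < j, K + b * L + s < t := fun b hb ↦ by
    have : (b + 1) * L ≤ t - K - 1 := (Nat.mul_le_mul_right L hb).trans (Nat.div_mul_le_self _ _)
    rw [add_mul, one_mul] at this
    omega
  have hcard_pre : prescheduled.card = j := by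
    rw [card_image_of_injective _ fun b₁ b₂ h ↦
      Nat.eq_of_mul_eq_mul_right (by omega : 0 < L) (by simpa using h), card_range]
  have hdisj : Disjoint F prescheduled := disjoint_left.mpr fun r hr hr' ↦ by
    obtain ⟨b, -, rfl⟩ := mem_image.mp hr'
    exact (hF _ hr).2.2.1 (by rw [offset_add_mul_add b (hS hs)]; exact hs)
  have hfirst : (i : ℕ) + 1 ∉ F ∪ prescheduled := by
    simp only [prescheduled, mem_union, mem_image, not_or, not_exists, not_and]
    exact ⟨fun h ↦ by have := (hF _ h).1; omega, fun b _ ↦ by omega⟩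
  have hsub : insert ((i : ℕ) + 1) (F ∪ prescheduled) ⊆
      (Icc 1 (t - 1)).filter (fun r ↦ arm r ω = i) := by
    intro r hr
    simp only [prescheduled, mem_insert, mem_union, mem_image, mem_range] at hr
    simp only [mem_filter, mem_Icc]
    rcases hr with rfl | hrF | ⟨b, hb, rfl⟩
    · have := hinit (i + 1) (by omega) (by omega)
      exact ⟨by omega, Fin.ext (by omega)⟩
    · obtain ⟨h1, h2, -, h4⟩ := hF r hrF
      exact ⟨by omega, h4⟩
    · exact ⟨by have := hpre_lt b hb; omega, (arm_add_mul_add hpre hS hs b).trans hgs⟩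
  have := card_le_card hsub
  rw [card_insert_of_notMem hfirst, card_union_of_disjoint hdisj, hcard_pre] at this
  rw [pullCount]
  omega

theorem card_lowCount_freePulls_le {T : ℕ} {S : Finset ℕ} {g : ℕ → Fin K}
    {arm : ℕ → Ω → Fin K} {ω : Ω}
    (hinit : ∀ t, 1 ≤ t → t ≤ K → (arm t ω : ℕ) = t - 1)
    (hpre : ∀ t, K < t → offset K L t ∈ S → arm t ω = g (offset K L t))
    (hS : S ⊆ Icc 1 L) (hScard : S.card = K) {s : ℕ} (hs : s ∈ S) {i : Fin K} (hgs : g s = i)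
    {u : ℝ} (hu : 0 ≤ u) :
    (((freeRounds K L T S).filter
        (fun t ↦ arm t ω = i ∧ (pullCount arm i (t - 1) ω : ℝ) < u)).card : ℝ) ≤
      (u + 1) * (L - K) / (L - K + 1) := by
  set F := (freeRounds K L T S).filter
    (fun t ↦ arm t ω = i ∧ (pullCount arm i (t - 1) ω : ℝ) < u)
  have hKL : (K : ℝ) ≤ L := by
    exact_mod_cast hScard ▸ (card_le_card hS).trans (by simp)
  rw [le_div_iff₀ (by linarith)]
  rcases F.eq_empty_or_nonempty with hF | hF
  · rw [hF, card_empty, Nat.cast_zero, zero_mul]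
    nlinarith
  have hFmem : ∀ r ∈ F, K < r ∧ offset K L r ∉ S ∧ arm r ω = i ∧
      (pullCount arm i (r - 1) ω : ℝ) < u := fun r hr ↦ by
    simp only [F, freeRounds, mem_filter, mem_Icc] at hr
    exact ⟨by omega, hr.1.2, hr.2⟩
  set t := F.max' hF
  obtain ⟨htK, -, -, hcount⟩ := hFmem t (F.max'_mem hF)
  have hbefore := one_add_card_add_blocks_le_pullCount hinit hpre hS hs hgs htK (F.erase t)
    fun r hr ↦ by
      obtain ⟨hrt, hrF⟩ := mem_erase.mp hr
      obtain ⟨h1, h2, h3, -⟩ := hFmem r hrF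
      exact ⟨h1, lt_of_le_of_ne (F.le_max' r hrF) hrt, h2, h3⟩
  rw [card_erase_of_mem (F.max'_mem hF)] at hbefore
  have hblocks := (card_le_card fun r hr ↦
      mem_filter.mpr ⟨(mem_filter.mp hr).1, F.le_max' r hr⟩).trans
    (card_freeRounds_filter_le (T := T) (by have := mem_Icc.mp (hS hs); omega) hS hScard t)
  have hpos : 1 ≤ F.card := card_pos.mpr hF
  set j := (t - K - 1) / L
  have hcount' : (F.card : ℝ) + j < u := by
    refine lt_of_le_of_lt ?_ hcount
    exact_mod_cast (by omega : F.card + j ≤ pullCount arm i (t - 1) ω)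
  have hblocks' : (F.card : ℝ) ≤ (j + 1) * (L - K) := by
    rw [← Nat.cast_sub (by exact_mod_cast hKL)]
    exact_mod_cast hblocks
  nlinarith

end Schedule

section UCB

variable {Ω : Type} {K : ℕ}

noncomputable def sampleMean (X : Fin K → ℕ → Ω → ℝ) (j : Fin K) (n : ℕ) (ω : Ω) : ℝ :=
  (∑ k ∈ range n, X j k ω) / n

noncomputable def confRadius (T n : ℕ) : ℝ := 2 * √(Real.log T / n)

theorem ucb_eq (T : ℕ) (X : Fin K → ℕ → Ω → ℝ) (arm : ℕ → Ω → Fin K) (j : Fin K) (t : ℕ)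
    (ω : Ω) : ucb T X arm j t ω =
      sampleMean X j (pullCount arm j (t - 1) ω) ω + confRadius T (pullCount arm j (t - 1) ω) :=
  rfl

def badEvent (T : ℕ) (X : Fin K → ℕ → Ω → ℝ) (μ : Fin K → ℝ) (i istar : Fin K) : Set Ω :=
  ⋃ n ∈ Icc 1 T, ({ω | μ i + confRadius T n ≤ sampleMean X i n ω} ∪
    {ω | sampleMean X istar n ω ≤ μ istar - confRadius T n})

theorem lt_of_lt_two_mul_confRadius {T n : ℕ} {Δ : ℝ} (hΔ : 0 < Δ) (hn : 0 < n)
    (hgap : Δ < 2 * confRadius T n) : (n : ℝ) < 16 * Real.log T / Δ ^ 2 := by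
  have : Δ / 4 < √(Real.log T / n) := by rw [confRadius] at hgap; linarith
  rw [Real.lt_sqrt (by positivity), lt_div_iff₀ (by exact_mod_cast hn)] at this
  rw [lt_div_iff₀ (by positivity)]
  linarith

theorem pullCount_lt_of_free_pull [MeasurableSpace Ω] {T L : ℕ} {S : Finset ℕ} {g : ℕ → Fin K}
    {X : Fin K → ℕ → Ω → ℝ} {arm : ℕ → Ω → Fin K} {μ : Fin K → ℝ} {i istar : Fin K}
    (hstrict : StrictUCB T L S g X arm) (hΔ : 0 < μ istar - μ i) {t : ℕ}
    (ht : t ∈ freeRounds K L T S) {ω : Ω} (harm : arm t ω = i)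
    (hω : ω ∉ badEvent T X μ i istar) :
    (pullCount arm i (t - 1) ω : ℝ) < 16 * Real.log T / (μ istar - μ i) ^ 2 := by
  obtain ⟨-, hinit, -, hucb⟩ := hstrict
  simp only [freeRounds, mem_filter, mem_Icc] at ht
  have hgood : ∀ j, 1 ≤ pullCount arm j (t - 1) ω ∧ pullCount arm j (t - 1) ω ≤ T := fun j ↦
    ⟨one_le_pullCount (hinit · ω) j (by omega), (pullCount_le arm j _ ω).trans (by omega)⟩
  simp only [badEvent, Set.mem_iUnion, Set.mem_union, Set.mem_ofPred_eq, mem_Icc, not_exists,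
    not_or, not_le] at hω
  have hi := (hω _ (hgood i)).1
  have hstar := (hω _ (hgood istar)).2
  have hmax := (hucb t ω (by omega) ht.2).1 istar
  rw [harm, ucb_eq, ucb_eq] at hmax
  exact lt_of_lt_two_mul_confRadius hΔ (hgood i).1 (by linarith)

theorem freePulls_le_of_notMem_badEvent [MeasurableSpace Ω] {T L : ℕ} {S : Finset ℕ}
    {g : ℕ → Fin K} {X : Fin K → ℕ → Ω → ℝ} {arm : ℕ → Ω → Fin K} {μ : Fin K → ℝ} {i istar : Fin K}
    (hstrict : StrictUCB T L S g X arm) (hS : S ⊆ Icc 1 L) (hScard : S.card = K)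
    (hg : Set.SurjOn g ↑S Set.univ) (hΔ : 0 < μ istar - μ i) {ω : Ω}
    (hω : ω ∉ badEvent T X μ i istar) :
    (freePulls arm L T S i ω : ℝ) ≤
      (16 * Real.log T / (μ istar - μ i) ^ 2 + 1) * (L - K) / (L - K + 1) := by
  obtain ⟨s, hs, hgs⟩ := hg (Set.mem_univ i)
  have hlow : (freeRounds K L T S).filter (fun t ↦ arm t ω = i) =
      (freeRounds K L T S).filter (fun t ↦ arm t ω = i ∧
        (pullCount arm i (t - 1) ω : ℝ) < 16 * Real.log T / (μ istar - μ i) ^ 2) :=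
    filter_congr fun t ht ↦
      ⟨fun harm ↦ ⟨harm, pullCount_lt_of_free_pull hstrict hΔ ht harm hω⟩, And.left⟩
  rw [freePulls, hlow]
  exact card_lowCount_freePulls_le (hstrict.2.1 · ω) (hstrict.2.2.1 · ω) hS hScard hs hgs
    (by have := Real.log_natCast_nonneg T; positivity)

theorem exp_neg_two_mul_confRadius_sq {T n : ℕ} (hT : 0 < T) (hn : 0 < n) :
    Real.exp (-2 * n * confRadius T n ^ 2) = ((T : ℝ) ^ 8)⁻¹ := by
  have hlog : 0 ≤ Real.log T := Real.log_nonneg (by exact_mod_cast hT)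
  rw [confRadius, mul_pow, Real.sq_sqrt (by positivity),
    show -2 * (n : ℝ) * (2 ^ 2 * (Real.log T / n)) = -((8 : ℕ) * Real.log T) by
      field_simp; ring,
    Real.exp_neg, Real.exp_nat_mul, Real.exp_log (by exact_mod_cast hT)]

theorem measurableSet_badEvent [MeasurableSpace Ω] {T : ℕ} {X : Fin K → ℕ → Ω → ℝ}
    (hmeas : ∀ j k, Measurable (X j k)) (μ : Fin K → ℝ) (i istar : Fin K) :
    MeasurableSet (badEvent T X μ i istar) := by
  have hmean : ∀ j n, Measurable (sampleMean X j n) := fun j n ↦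
    (Finset.measurable_sum _ fun k _ ↦ hmeas j k).div_const _
  exact (Icc 1 T).measurableSet_biUnion fun n _ ↦
    (measurableSet_le measurable_const (hmean i n)).union
      (measurableSet_le (hmean istar n) measurable_const)

theorem mul_measureReal_badEvent_le_one [MeasurableSpace Ω] {P : Measure Ω}
    [IsProbabilityMeasure P] {T : ℕ} {X : Fin K → ℕ → Ω → ℝ} {μ : Fin K → ℝ}
    (henv : BanditEnv P X μ) (hT : 2 ≤ T) (i istar : Fin K) :
    (T : ℝ) * P.real (badEvent T X μ i istar) ≤ 1 := by
  obtain ⟨hmeas, hX, hind, -, hmean⟩ := henv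
  have hind_arm : ∀ j : Fin K, iIndepFun (X j) P := fun j ↦
    hind.precomp (g := fun k ↦ (j, k)) fun _ _ h ↦ (Prod.mk.inj h).2
  have hr : ∀ n, 0 ≤ confRadius T n := fun n ↦ by unfold confRadius; positivity
  have hterm : ∀ n ∈ Icc 1 T,
      P.real ({ω | μ i + confRadius T n ≤ sampleMean X i n ω} ∪
        {ω | sampleMean X istar n ω ≤ μ istar - confRadius T n}) ≤ 2 * ((T : ℝ) ^ 8)⁻¹ := by
    intro n hn
    have hn : 0 < n := (mem_Icc.mp hn).1
    rw [two_mul, ← exp_neg_two_mul_confRadius_sq (by omega : 0 < T) hn]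
    exact (measureReal_union_le _ _).trans (add_le_add
      (measureReal_mean_add_le_sampleMean_le (hind_arm i) (hmeas i) (hX i) (hmean i) hn (hr n))
      (measureReal_sampleMean_le_mean_sub_le (hind_arm istar) (hmeas istar) (hX istar)
        (hmean istar) hn (hr n)))
  have hunion := (measureReal_biUnion_finset_le _ _).trans (sum_le_sum hterm)
  rw [sum_const, Nat.card_Icc, Nat.add_sub_cancel, nsmul_eq_mul] at hunion
  have hT' : (2 : ℝ) ≤ T := by exact_mod_cast hT
  calc (T : ℝ) * P.real (badEvent T X μ i istar) ≤ T * (T * (2 * ((T : ℝ) ^ 8)⁻¹)) :=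
        mul_le_mul_of_nonneg_left hunion (by positivity)
    _ = 2 / T ^ 6 := by field_simp
    _ ≤ 1 := by
        rw [div_le_one (by positivity)]
        nlinarith [pow_le_pow_left₀ (by norm_num) hT' 6]

end UCB

end FairBandit

/-- For the strict-rate-constrained UCB algorithm there is an
absolute constant `C > 0` such that for every arm `i` with `Δ_i > 0`:
`E[m_T(i)] ≤ (16 ln T / Δ_i²)·(1-Kv)/(1-(K-1)v) + 2(1-Kv)² + C`, where `v = 1/L`. -/
theorem strict_ucb_free_pulls_bound :
    ∃ C : ℝ, 0 < C ∧
      ∀ (Ω : Type) (_ : MeasurableSpace Ω) (P : Measure Ω), IsProbabilityMeasure P →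
      ∀ (K T L : ℕ) (S : Finset ℕ) (g : ℕ → Fin K) (X : Fin K → ℕ → Ω → ℝ)
        (μ : Fin K → ℝ) (istar : Fin K) (arm : ℕ → Ω → Fin K),
        2 ≤ K → max K 2 ≤ T → K ≤ L →
        S ⊆ Finset.Icc 1 L → S.card = K → Set.BijOn g ↑S (Set.univ : Set (Fin K)) →
        BanditEnv P X μ → StrictUCB T L S g X arm →
        (∀ j, μ j ≤ μ istar) →
        ∀ i : Fin K, 0 < μ istar - μ i →
          (∫ ω, (freePulls arm L T S i ω : ℝ) ∂P) ≤
            (16 * Real.log T / (μ istar - μ i) ^ 2) *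
                ((1 - (K : ℝ) * (1 / (L : ℝ))) / (1 - ((K : ℝ) - 1) * (1 / (L : ℝ))))
              + 2 * (1 - (K : ℝ) * (1 / (L : ℝ))) ^ 2 + C := by
  refine ⟨2, two_pos, ?_⟩
  intro Ω _ P _ K T L S g X μ istar arm hK hT hKL hS hScard hbij henv hstrict _ i hΔ
  set u := 16 * Real.log T / (μ istar - μ i) ^ 2
  have hu : 0 ≤ u := by have := Real.log_natCast_nonneg T; positivity
  have hD : (0 : ℝ) ≤ L - K := sub_nonneg.mpr (by exact_mod_cast hKL)
  have hL : (0 : ℝ) < L := by exact_mod_cast (by omega : 0 < L)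
  have hratio : (1 - (K : ℝ) * (1 / L)) / (1 - ((K : ℝ) - 1) * (1 / L)) =
      (L - K) / (L - K + 1) := by
    have hnum : 1 - (K : ℝ) * (1 / L) = (L - K) / L := by field_simp
    have hden : 1 - ((K : ℝ) - 1) * (1 / L) = (L - K + 1) / L := by field_simp; ring
    rw [hnum, hden, div_div_div_cancel_right₀ hL.ne']
  have hfree_le : ∀ ω, (freePulls arm L T S i ω : ℝ) ≤ T := fun ω ↦ by
    exact_mod_cast (card_filter_le _ _).trans ((card_filter_le _ _).trans (by simp))
  have hintegral := integral_le_add_mul_measureReal (P := P)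
    (fun ω ↦ Nat.cast_nonneg (freePulls arm L T S i ω))
    (measurableSet_badEvent henv.1 μ i istar) (by positivity) hfree_le
    fun ω hω ↦ freePulls_le_of_notMem_badEvent hstrict hS hScard hbij.surjOn hΔ hω
  have hbad := mul_measureReal_badEvent_le_one henv (le_of_max_le_right hT) i istar
  have hsplit : (u + 1) * (L - K) / (L - K + 1) ≤ u * ((L - K) / (L - K + 1)) + 1 := by
    rw [mul_div_assoc, add_mul, one_mul]
    gcongr
    exact div_le_one_of_le₀ (by linarith) (by linarith)
  rw [hratio]
  linarith [sq_nonneg (1 - (K : ℝ) * (1 / L))]
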